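/- arXiv:1303.5464 — 5 statements merged into one kernel-verified Lean document; each statement's English description precedes it below -/
import Mathlib

section
/- The double series defining the regularized confluent hypergeometric function of two variables, Φ̃₃(b,c;w,z) = Σ_{k≥0} Σ_{m≥0} (b)_k / Γ(c+k+m) · w^k z^m / (k! m!), converges absolutely for all real b, c, w, z (where (b)_k = Γ(b+k)/Γ(b) is the Pochhammer symbol and terms with Γ evaluated at non-positive integers are interpreted as zero via 1/Γ). -/
open scoped BigOperators
open MeasureTheory

/-- Term of the double series defining the regularized Φ̃₃ function. -/
noncomputable def phi3Term (b c w z : ℝ) (k m : ℕ) : ℝ :=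
  Polynomial.eval b (ascPochhammer ℝ k) * (Real.Gamma (c + k + m))⁻¹ *
    w ^ k * z ^ m / (Nat.factorial k * Nat.factorial m)

/-- The regularized confluent hypergeometric function of two variables Φ̃₃. -/
noncomputable def Phi3 (b c w z : ℝ) : ℝ :=
  ∑' k : ℕ, ∑' m : ℕ, phi3Term b c w z k m

/-- Modified Bessel function of the first kind of integer order (I₋ₙ = Iₙ). -/
noncomputable def besselI (n : ℤ) (x : ℝ) : ℝ :=
  ∑' m : ℕ, (x / 2) ^ (2 * m + n.natAbs) /
    (Nat.factorial m * Nat.factorial (m + n.natAbs))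

/-- Modified Bessel function of the first kind of real order. -/
noncomputable def besselIR (ν x : ℝ) : ℝ :=
  ∑' m : ℕ, (x / 2) ^ ((2 * m : ℝ) + ν) * (Real.Gamma ((m : ℝ) + ν + 1))⁻¹ /
    Nat.factorial m

/-- Generalized Marcum-Q function of integer order. -/
noncomputable def marcumQ (m : ℤ) (a b : ℝ) : ℝ :=
  ∫ x in Set.Ioi b,
    x ^ m / a ^ (m - 1) * Real.exp (-(a ^ 2 + x ^ 2) / 2) * besselI (m - 1) (a * x)

/-- Generalized Marcum-Q function of real order. -/
noncomputable def marcumQR (m a b : ℝ) : ℝ :=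
  ∫ x in Set.Ioi b,
    x ^ m / a ^ (m - 1) * Real.exp (-(a ^ 2 + x ^ 2) / 2) * besselIR (m - 1) (a * x)

/-- The polynomials A_i(b,c;z) in the Φ̃₃ reduction formula. -/
noncomputable def Acoef (b : ℕ) (c z : ℝ) (i : ℕ) : ℝ :=
  ((-1 : ℝ) ^ (b - 1) / Nat.factorial (b - 1)) *
    ∑ k ∈ Finset.range (i / 2 + 1),
      (-1 : ℝ) ^ k * Polynomial.eval ((b : ℝ) - i + k) (ascPochhammer ℝ (i - k)) *
        Polynomial.eval (c - i - 1 + k) (ascPochhammer ℝ (i - 2 * k)) * z ^ k /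
        (Nat.factorial (i - 2 * k) * Nat.factorial k)

/-! For fixed `k` the `m`-series is dominated by an exponential series, because `Γ` increases on
`[2, ∞)`. The same monotonicity gives `Γ(c + k + m) ≥ Γ(c + k)` once `c + k ≥ 2`, so from then on
the `k`-th row sum is at most `|(b)_k w^k / (Γ(c + k) k!)| · e^{|z|}`. These are the terms of the
regularized Kummer series `₁F̃₁(b; c; w)`, which converges absolutely by the ratio test. -/

open Nat Real Filter

lemma Real.inv_Gamma_le_inv_Gamma {x y : ℝ} (hx : 2 ≤ x) (hxy : x ≤ y) :
    (Gamma y)⁻¹ ≤ (Gamma x)⁻¹ :=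
  inv_anti₀ (Gamma_pos_of_pos (by linarith))
    (Gamma_strictMonoOn_Ici.monotoneOn hx (hx.trans hxy) hxy)

noncomputable def regKummerTerm (a c x : ℝ) (n : ℕ) : ℝ :=
  (ascPochhammer ℝ n).eval a * (Gamma (c + n))⁻¹ * x ^ n / n !

lemma regKummerTerm_succ (a c x : ℝ) {n : ℕ} (hn : c + n ≠ 0) :
    regKummerTerm a c x (n + 1) =
      regKummerTerm a c x n * ((a + n) * x / ((c + n) * (n + 1))) := by
  have hGamma : Gamma (c + ↑(n + 1)) = (c + n) * Gamma (c + n) := by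
    rw [cast_succ, ← add_assoc, Gamma_add_one hn]
  simp only [regKummerTerm, hGamma, ascPochhammer_succ_eval, factorial_succ, pow_succ]
  push_cast
  field_simp

lemma abs_regKummerTerm_ratio_le {a c x : ℝ} {n : ℕ} (hn : |a| + 2 * |c| + 8 * |x| + 1 ≤ n) :
    |(a + n) * x / ((c + n) * (n + 1))| ≤ 1 / 2 := by
  have hcn : (n + 1) / 2 ≤ c + n := by linarith [neg_abs_le c, abs_nonneg a, abs_nonneg x]
  have han : |a + n| ≤ 2 * n := by
    linarith [abs_add_le a n, abs_of_nonneg (cast_nonneg (α := ℝ) n), abs_nonneg c, abs_nonneg x]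
  have hx : 8 * |x| ≤ n + 1 := by linarith [abs_nonneg a, abs_nonneg c]
  have hpos : 0 < (c + n) * (n + 1) := mul_pos (by linarith) (by positivity)
  rw [abs_div, abs_of_pos hpos, div_le_iff₀ hpos, abs_mul]
  calc |a + n| * |x| ≤ 2 * n * |x| := by gcongr
    _ ≤ 1 / 4 * (n + 1) * (n + 1) := by nlinarith [abs_nonneg x]
    _ ≤ 1 / 2 * ((c + n) * (n + 1)) := by nlinarith

lemma summable_abs_regKummerTerm (a c x : ℝ) :
    Summable fun n => |regKummerTerm a c x n| := by
  refine summable_of_ratio_norm_eventually_le (r := 1 / 2) (by norm_num) ?_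
  filter_upwards [eventually_ge_atTop (⌈|a| + 2 * |c| + 8 * |x|⌉₊ + 1)] with n hn
  have hn : |a| + 2 * |c| + 8 * |x| + 1 ≤ n := by
    have : (⌈|a| + 2 * |c| + 8 * |x|⌉₊ + 1 : ℝ) ≤ n := mod_cast hn
    linarith [le_ceil (|a| + 2 * |c| + 8 * |x|)]
  have hcn : 0 < c + n := by linarith [neg_abs_le c, abs_nonneg a, abs_nonneg x]
  rw [norm_abs_eq_norm, norm_abs_eq_norm, regKummerTerm_succ a c x hcn.ne', norm_mul, mul_comm]
  exact mul_le_mul_of_nonneg_right (abs_regKummerTerm_ratio_le hn) (norm_nonneg _)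

section Phi3

variable (b c w z : ℝ)

lemma phi3Term_eq (k m : ℕ) :
    phi3Term b c w z k m =
      (ascPochhammer ℝ k).eval b * w ^ k / k ! * (Gamma (c + k + m))⁻¹ * (z ^ m / m !) := by
  simp only [phi3Term]
  ring

lemma abs_phi3Term_le {k m : ℕ} {x : ℝ} (hx : 2 ≤ x) (hxkm : x ≤ c + k + m) :
    |phi3Term b c w z k m| ≤
      |(ascPochhammer ℝ k).eval b * w ^ k / k !| * (Gamma x)⁻¹ * (|z| ^ m / m !) := by
  have hGamma : 0 < Gamma (c + k + m) := Gamma_pos_of_pos (by linarith)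
  rw [phi3Term_eq, abs_mul, abs_mul, abs_inv, abs_of_pos hGamma, abs_div (z ^ m), abs_pow,
    Nat.abs_cast]
  gcongr _ * ?_ * _
  exact inv_Gamma_le_inv_Gamma hx hxkm

lemma summable_abs_phi3Term_right (k : ℕ) : Summable fun m => |phi3Term b c w z k m| := by
  set M := ⌈2 - (c + k)⌉₊
  refine .of_norm_bounded_eventually_nat ((Real.summable_pow_div_factorial |z|).mul_left
    (|(ascPochhammer ℝ k).eval b * w ^ k / k !| * (Gamma (c + k + M))⁻¹)) ?_
  filter_upwards [eventually_ge_atTop M] with m hm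
  rw [norm_abs_eq_norm, norm_eq_abs]
  refine abs_phi3Term_le b c w z (by linarith [le_ceil (2 - (c + k))]) ?_
  gcongr

lemma tsum_abs_phi3Term_right_le {k : ℕ} (hk : 2 ≤ c + k) :
    ∑' m, |phi3Term b c w z k m| ≤ |regKummerTerm b c w k| * ∑' m : ℕ, |z| ^ m / m ! := by
  have hGamma : 0 < Gamma (c + k) := Gamma_pos_of_pos (by linarith)
  have hKummer : |regKummerTerm b c w k| =
      |(ascPochhammer ℝ k).eval b * w ^ k / k !| * (Gamma (c + k))⁻¹ := by
    rw [← abs_of_pos (inv_pos.mpr hGamma), ← abs_mul, regKummerTerm]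
    ring_nf
  rw [← tsum_mul_left, hKummer]
  exact (summable_abs_phi3Term_right b c w z k).tsum_le_tsum
    (fun m => abs_phi3Term_le b c w z hk (by linarith [cast_nonneg (α := ℝ) m]))
    ((Real.summable_pow_div_factorial |z|).mul_left _)

end Phi3

/-- absolute convergence of the Φ̃₃ double series for all real parameters. -/
theorem phi3_summable_abs (b c w z : ℝ) :
    Summable (fun p : ℕ × ℕ => |phi3Term b c w z p.1 p.2|) := by
  refine (summable_prod_of_nonneg fun p => abs_nonneg _).mpr
    ⟨summable_abs_phi3Term_right b c w z, ?_⟩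
  refine .of_norm_bounded_eventually_nat
    ((summable_abs_regKummerTerm b c w).mul_right (∑' m : ℕ, |z| ^ m / m !)) ?_
  filter_upwards [eventually_ge_atTop ⌈2 - c⌉₊] with k hk
  rw [norm_of_nonneg (tsum_nonneg fun m => abs_nonneg _)]
  refine tsum_abs_phi3Term_right_le b c w z ?_
  linarith [le_ceil (2 - c), (cast_le (α := ℝ)).mpr hk]
end

section
/- For c ∈ ℝ, b > 1, and x ≠ 0, the regularized Φ̃₃ function satisfies the three-term recursion Φ̃₃(b,c;w,z) = (1/((b-1)w)) · [Φ̃₃(b-1,c-2;w,z) − (c−2)·Φ̃₃(b−1,c−1;w,z) − z·Φ̃₃(b−1,c;w,z)]. -/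
open scoped BigOperators
open MeasureTheory

open scoped Nat
open Filter Asymptotics

/-!
Since `1/Γ(s) = s/Γ(s+1)`, each term of `Φ̃₃(b,c)` equals `(c+k+m)` times the corresponding term
of `Φ̃₃(b,c+1)`. The parts `k·(…)` and `m·(…)` are, after shifting `k` resp. `m` by one,
`b w` times the terms of `Φ̃₃(b+1,c+2)` and `z` times those of `Φ̃₃(b,c+2)`. This gives the
contiguous relation `Φ̃₃(b,c) = c Φ̃₃(b,c+1) + b w Φ̃₃(b+1,c+2) + z Φ̃₃(b,c+2)`, valid for all
parameters because the double series converges absolutely: `|(b)ₖ| ≤ max 1 |b| ^ k k!` and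
`|1/Γ(c+n)| ≤ C Bⁿ/n!`. The recursion is this relation at `(b-1, c-2)`.
-/

theorem Real.inv_Gamma_eq_self_mul_inv_Gamma_add_one (s : ℝ) :
    (Real.Gamma s)⁻¹ = s * (Real.Gamma (s + 1))⁻¹ := by
  rcases ne_or_eq s 0 with h | rfl
  · rw [Real.Gamma_add_one h, mul_inv, mul_inv_cancel_left₀ h]
  · rw [zero_add, Real.Gamma_zero, inv_zero, zero_mul]

theorem exists_abs_inv_Gamma_add_nat_le (c : ℝ) :
    ∃ C B : ℝ, 0 ≤ C ∧ 0 ≤ B ∧ ∀ n : ℕ, |(Real.Gamma (c + n))⁻¹| ≤ C * (B ^ n / n !) := by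
  set B : ℝ := max 1 (2 - c)
  have hB : 0 < B := lt_max_of_lt_left one_pos
  set u : ℕ → ℝ := fun n => |(Real.Gamma (c + n))⁻¹| * n ! / B ^ n
  obtain ⟨N, hN⟩ : ∃ N : ℕ, 1 ≤ c + N := ⟨⌈1 - c⌉₊, by linarith [Nat.le_ceil (1 - c)]⟩
  -- `u (n + 1) / u n = (n + 1) / ((c + n) B) ≤ 1` as soon as `c + n ≥ 1`
  have hu : ∀ n ≥ N, u (n + 1) ≤ u n := by
    intro n hn
    have hcn : 1 ≤ c + n := hN.trans (by gcongr)
    have hratio : (n + 1 : ℝ) ≤ (c + n) * B := by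
      nlinarith [le_max_left 1 (2 - c), le_max_right 1 (2 - c)]
    obtain ⟨G, hG, hGdef⟩ : ∃ G, 0 ≤ G ∧ |(Real.Gamma (c + (n + 1)))⁻¹| = G :=
      ⟨_, abs_nonneg _, rfl⟩
    have hrec : |(Real.Gamma (c + n))⁻¹| = (c + n) * G := by
      rw [Real.inv_Gamma_eq_self_mul_inv_Gamma_add_one, abs_mul, abs_of_pos (by linarith),
        add_assoc, hGdef]
    simp only [u, hrec, Nat.factorial_succ, pow_succ, Nat.cast_mul, Nat.cast_succ, hGdef]
    rw [div_le_div_iff₀ (by positivity) (by positivity)]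
    calc G * ((n + 1) * n !) * B ^ n = G * n ! * B ^ n * (n + 1) := by ring
      _ ≤ G * n ! * B ^ n * ((c + n) * B) := by gcongr
      _ = (c + n) * G * n ! * (B ^ n * B) := by ring
  have hbound : ∀ᶠ n : ℕ in atTop, ‖(Real.Gamma (c + n))⁻¹‖ ≤ u N * ‖B ^ n / (n ! : ℝ)‖ := by
    refine eventually_atTop.2 ⟨N, fun n hn => ?_⟩
    have hun : u n ≤ u N := antitoneOn_nat_Ici_of_succ_le hu (le_refl N) hn hn
    rw [Real.norm_eq_abs, Real.norm_of_nonneg (by positivity),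
      show |(Real.Gamma (c + n))⁻¹| = u n * (B ^ n / n !) by simp only [u]; field_simp]
    gcongr
  obtain ⟨C, hC⟩ := (isBigO_nat_atTop_iff (f := fun n : ℕ => (Real.Gamma (c + n))⁻¹)
    (g := fun n : ℕ => B ^ n / (n ! : ℝ)) fun n h => absurd h (by positivity)).1
    (IsBigO.of_bound _ hbound)
  have hCn (n : ℕ) : |(Real.Gamma (c + n))⁻¹| ≤ C * (B ^ n / n !) := by
    simpa only [Real.norm_eq_abs, abs_of_nonneg (by positivity : 0 ≤ B ^ n / n !)] using hC n
  exact ⟨C, B, by simpa using (abs_nonneg _).trans (hCn 0), hB.le, hCn⟩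

theorem abs_ascPochhammer_eval_le (b : ℝ) (k : ℕ) :
    |(ascPochhammer ℝ k).eval b| ≤ max 1 |b| ^ k * k ! := by
  induction k with
  | zero => simp
  | succ k ih =>
    have hfactor : |b + k| ≤ max 1 |b| * (k + 1) := by
      nlinarith [le_max_left 1 |b|, le_max_right 1 |b|, abs_add_le b k,
        abs_of_nonneg (Nat.cast_nonneg k : (0 : ℝ) ≤ k)]
    rw [ascPochhammer_succ_eval, abs_mul, Nat.factorial_succ, pow_succ]
    push_cast
    calc |(ascPochhammer ℝ k).eval b| * |b + k|
        ≤ (max 1 |b| ^ k * k !) * (max 1 |b| * (k + 1)) := by gcongr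
      _ = _ := by ring

theorem hasSum_comp_prodMap_succ_fst_iff {α : Type*} [AddCommMonoid α] [TopologicalSpace α]
    {f : ℕ × ℕ → α} {a : α} (hf : ∀ m, f (0, m) = 0) :
    HasSum (f ∘ Prod.map (· + 1) id) a ↔ HasSum f a := by
  refine (Nat.succ_injective.prodMap Function.injective_id).hasSum_iff fun p hp => ?_
  obtain ⟨_ | k, m⟩ := p
  · exact hf m
  · exact absurd ⟨(k, m), rfl⟩ hp

theorem hasSum_comp_prodMap_succ_snd_iff {α : Type*} [AddCommMonoid α] [TopologicalSpace α]
    {f : ℕ × ℕ → α} {a : α} (hf : ∀ k, f (k, 0) = 0) :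
    HasSum (f ∘ Prod.map id (· + 1)) a ↔ HasSum f a := by
  refine (Function.injective_id.prodMap Nat.succ_injective).hasSum_iff fun p hp => ?_
  obtain ⟨k, _ | m⟩ := p
  · exact hf k
  · exact absurd ⟨(k, m), rfl⟩ hp

section

variable (b c w z : ℝ)

theorem summable_phi3Term : Summable fun p : ℕ × ℕ => phi3Term b c w z p.1 p.2 := by
  obtain ⟨C, B, hC, hB, hGamma⟩ := exists_abs_inv_Gamma_add_nat_le c
  set A := max 1 |b|
  have hmajorant : Summable fun p : ℕ × ℕ =>
      C * ((A * B * |w|) ^ p.1 / p.1 ! * ((B * |z|) ^ p.2 / p.2 !)) :=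
    ((Real.summable_pow_div_factorial _).mul_of_nonneg (Real.summable_pow_div_factorial _)
      (fun _ => by positivity) (fun _ => by positivity)).mul_left C
  refine hmajorant.of_norm_bounded fun ⟨k, m⟩ => ?_
  have hGamma' : |(Real.Gamma (c + k + m))⁻¹| ≤ C * (B ^ (k + m) / (k + m) !) := by
    simpa [add_assoc] using hGamma (k + m)
  have hfac : (k ! : ℝ) ≤ (k + m) ! := by exact_mod_cast Nat.factorial_le (k.le_add_right m)
  calc ‖phi3Term b c w z k m‖
      = |(ascPochhammer ℝ k).eval b| * |(Real.Gamma (c + k + m))⁻¹| * |w| ^ k * |z| ^ m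
          / (k ! * m !) := by
        simp [phi3Term]
    _ ≤ (A ^ k * k !) * (C * (B ^ (k + m) / k !)) * |w| ^ k * |z| ^ m / (k ! * m !) := by
        gcongr
        · exact abs_ascPochhammer_eval_le b k
        · exact hGamma'.trans (by gcongr)
    _ = C * ((A * B * |w|) ^ k / k ! * ((B * |z|) ^ m / m !)) := by
        field_simp
        ring

theorem hasSum_phi3Term : HasSum (fun p : ℕ × ℕ => phi3Term b c w z p.1 p.2) (Phi3 b c w z) := by
  rw [Phi3, ← (summable_phi3Term b c w z).tsum_prod]
  exact (summable_phi3Term b c w z).hasSum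

theorem phi3Term_eq_mul_phi3Term_add_one (k m : ℕ) :
    phi3Term b c w z k m = (c + k + m) * phi3Term b (c + 1) w z k m := by
  simp only [phi3Term, Real.inv_Gamma_eq_self_mul_inv_Gamma_add_one (c + k + m),
    show c + k + m + 1 = c + 1 + k + m by ring]
  ring

theorem succ_mul_phi3Term_succ_left (k m : ℕ) :
    ((k + 1 : ℕ) : ℝ) * phi3Term b c w z (k + 1) m = b * w * phi3Term (b + 1) (c + 1) w z k m := by
  simp only [phi3Term, ascPochhammer_succ_left, Polynomial.eval_mul, Polynomial.eval_comp,
    Polynomial.eval_add, Polynomial.eval_X, Polynomial.eval_one, Nat.factorial_succ,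
    show c + ((k + 1 : ℕ) : ℝ) + m = c + 1 + k + m by push_cast; ring]
  push_cast
  field_simp
  ring

theorem succ_mul_phi3Term_succ_right (k m : ℕ) :
    ((m + 1 : ℕ) : ℝ) * phi3Term b c w z k (m + 1) = z * phi3Term b (c + 1) w z k m := by
  simp only [phi3Term, Nat.factorial_succ,
    show c + k + ((m + 1 : ℕ) : ℝ) = c + 1 + k + m by push_cast; ring]
  push_cast
  field_simp
  ring

theorem Phi3_eq_add_Phi3 :
    Phi3 b c w z = c * Phi3 b (c + 1) w z + b * w * Phi3 (b + 1) (c + 2) w z +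
      z * Phi3 b (c + 2) w z := by
  have hfst : HasSum (fun p : ℕ × ℕ => (p.1 : ℝ) * phi3Term b (c + 1) w z p.1 p.2)
      (b * w * Phi3 (b + 1) (c + 2) w z) := by
    rw [← hasSum_comp_prodMap_succ_fst_iff (by simp)]
    refine ((hasSum_phi3Term (b + 1) (c + 2) w z).mul_left (b * w)).congr_fun fun p => ?_
    simp only [Function.comp_apply, Prod.map_fst, Prod.map_snd, id,
      succ_mul_phi3Term_succ_left, add_assoc, one_add_one_eq_two]
  have hsnd : HasSum (fun p : ℕ × ℕ => (p.2 : ℝ) * phi3Term b (c + 1) w z p.1 p.2)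
      (z * Phi3 b (c + 2) w z) := by
    rw [← hasSum_comp_prodMap_succ_snd_iff (by simp)]
    refine ((hasSum_phi3Term b (c + 2) w z).mul_left z).congr_fun fun p => ?_
    simp only [Function.comp_apply, Prod.map_fst, Prod.map_snd, id,
      succ_mul_phi3Term_succ_right, add_assoc, one_add_one_eq_two]
  refine (hasSum_phi3Term b c w z).unique <|
    (((hasSum_phi3Term b (c + 1) w z).mul_left c).add hfst |>.add hsnd).congr_fun fun p => ?_
  rw [phi3Term_eq_mul_phi3Term_add_one]
  ring

end

/-- three-term recursion for Φ̃₃ in its first parameter. -/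
theorem phi3_recursion (b c w z : ℝ) (hb : 1 < b) (hw : w ≠ 0) :
    Phi3 b c w z =
      (1 / ((b - 1) * w)) *
        (Phi3 (b - 1) (c - 2) w z - (c - 2) * Phi3 (b - 1) (c - 1) w z -
          z * Phi3 (b - 1) c w z) := by
  have h := Phi3_eq_add_Phi3 (b - 1) (c - 2) w z
  rw [sub_add_cancel, show c - 2 + 1 = c - 1 by ring, show c - 2 + 2 = c by ring] at h
  have hb1 : b - 1 ≠ 0 := sub_ne_zero.2 hb.ne'
  rw [h]
  field_simp
  ring
end

section
/- For a > 0, b ≥ 0, and any positive integer m, the generalized Marcum-Q function satisfies Q_m(a,b) = 1 − Q_{1−m}(b,a), where for non-positive integer order n the function Q_n is defined by the same integral formula Q_n(a,b) = ∫_b^∞ (x^n / a^{n−1}) exp(−(a²+x²)/2) I_{n−1}(ax) dx with I_{n−1} = I_{1−n} the modified Bessel function of integer order. -/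
open scoped BigOperators
open MeasureTheory

/-!
Expanding `I_{m-1}` in its power series turns both integrands into series of odd Gaussian
moments `x ^ (2n+1) * exp (-x²/2)`, whose tails over `(c, ∞)` are
`2ⁿ n! exp (-c²/2) ∑_{i ≤ n} (c²/2)ⁱ / i!`. With `X = a²/2` and `Y = b²/2` this gives
`Q_m(a, b) = e^{-X-Y} ∑_{i < k+m} Xᵏ Yⁱ / (k! i!)` and
`Q_{1-m}(b, a) = e^{-X-Y} ∑_{i ≥ k+m} Xᵏ Yⁱ / (k! i!)`, the two halves of the double series
of `e^{-X-Y} e^X e^Y = 1`.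
-/

open Real Set Filter Topology
open scoped Nat

lemma integrable_pow_mul_exp_neg_sq_div_two (n : ℕ) :
    Integrable fun x : ℝ => x ^ n * exp (-x ^ 2 / 2) := by
  have h := integrable_rpow_mul_exp_neg_mul_sq (b := 1 / 2) (by norm_num) (s := n)
    (by linarith [(n.cast_nonneg : (0 : ℝ) ≤ n)])
  refine h.congr (Eventually.of_forall fun x => ?_)
  simp only [rpow_natCast]
  ring_nf

lemma tendsto_pow_mul_exp_neg_sq_div_two_atTop (n : ℕ) :
    Tendsto (fun x : ℝ => x ^ n * exp (-x ^ 2 / 2)) atTop (𝓝 0) := by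
  have h := (rpow_mul_exp_neg_mul_sq_isLittleO_exp_neg (b := 1 / 2) (by norm_num) n).trans_tendsto
    (tendsto_exp_atBot.comp (tendsto_id.const_mul_atTop_of_neg (by norm_num)))
  refine h.congr fun x => ?_
  simp only [rpow_natCast]
  ring_nf

lemma hasDerivAt_exp_neg_sq_div_two (x : ℝ) :
    HasDerivAt (fun y : ℝ => exp (-y ^ 2 / 2)) (-x * exp (-x ^ 2 / 2)) x := by
  have h : HasDerivAt (fun y : ℝ => -y ^ 2 / 2) (-x) x := by
    refine ((hasDerivAt_pow 2 x).neg.div_const 2).congr_deriv ?_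
    ring
  exact h.exp.congr_deriv (mul_comm _ _)

lemma integral_Ioi_pow_one_mul_exp_neg_sq_div_two (c : ℝ) :
    ∫ x in Ioi c, x ^ 1 * exp (-x ^ 2 / 2) = exp (-c ^ 2 / 2) := by
  have hderiv (x : ℝ) (_ : x ∈ Ici c) :
      HasDerivAt (fun y : ℝ => -exp (-y ^ 2 / 2)) (x ^ 1 * exp (-x ^ 2 / 2)) x :=
    (hasDerivAt_exp_neg_sq_div_two x).neg.congr_deriv (by ring)
  have hlim := (tendsto_pow_mul_exp_neg_sq_div_two_atTop 0).neg
  simp only [pow_zero, one_mul, neg_zero] at hlim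
  rw [integral_Ioi_of_hasDerivAt_of_tendsto' hderiv
    (integrable_pow_mul_exp_neg_sq_div_two 1).integrableOn hlim]
  ring

lemma integral_Ioi_pow_add_two_mul_exp_neg_sq_div_two (k : ℕ) (c : ℝ) :
    ∫ x in Ioi c, x ^ (k + 2) * exp (-x ^ 2 / 2)
      = c ^ (k + 1) * exp (-c ^ 2 / 2) + (k + 1) * ∫ x in Ioi c, x ^ k * exp (-x ^ 2 / 2) := by
  have hderiv (x : ℝ) (_ : x ∈ Ici c) :
      HasDerivAt (fun y : ℝ => -(y ^ (k + 1) * exp (-y ^ 2 / 2)))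
        (x ^ (k + 2) * exp (-x ^ 2 / 2) - (k + 1) * (x ^ k * exp (-x ^ 2 / 2))) x := by
    refine ((hasDerivAt_pow (k + 1) x).mul (hasDerivAt_exp_neg_sq_div_two x)).neg.congr_deriv ?_
    push_cast
    ring
  have hint_succ := integrable_pow_mul_exp_neg_sq_div_two (k + 2)
  have hint := (integrable_pow_mul_exp_neg_sq_div_two k).const_mul (k + 1 : ℝ)
  have hlim := (tendsto_pow_mul_exp_neg_sq_div_two_atTop (k + 1)).neg
  rw [neg_zero] at hlim
  have h := integral_Ioi_of_hasDerivAt_of_tendsto' hderiv (hint_succ.sub hint).integrableOn hlim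
  rw [integral_sub hint_succ.integrableOn hint.integrableOn, integral_const_mul] at h
  linarith

lemma integral_Ioi_pow_two_mul_add_one_mul_exp_neg_sq_div_two (n : ℕ) (c : ℝ) :
    ∫ x in Ioi c, x ^ (2 * n + 1) * exp (-x ^ 2 / 2)
      = 2 ^ n * n ! * exp (-c ^ 2 / 2) * ∑ i ∈ Finset.range (n + 1), (c ^ 2 / 2) ^ i / i ! := by
  induction n with
  | zero => simpa using integral_Ioi_pow_one_mul_exp_neg_sq_div_two c
  | succ n ih =>
    rw [show 2 * (n + 1) + 1 = 2 * n + 1 + 2 by ring,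
      integral_Ioi_pow_add_two_mul_exp_neg_sq_div_two, ih, Finset.sum_range_succ _ (n + 1),
      Nat.factorial_succ]
    push_cast
    simp only [div_pow, ← pow_mul]
    field_simp
    ring

lemma integral_abs_pow_two_mul_add_one_mul_exp_neg_sq_div_two (n : ℕ) :
    ∫ x, |x| ^ (2 * n + 1) * exp (-x ^ 2 / 2) = 2 ^ (n + 1) * n ! := by
  have h := integral_comp_abs (f := fun x => x ^ (2 * n + 1) * exp (-x ^ 2 / 2))
  simp only [sq_abs] at h
  rw [h, integral_Ioi_pow_two_mul_add_one_mul_exp_neg_sq_div_two]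
  simp [Finset.sum_range_succ', pow_succ]
  ring

lemma integral_Ioi_tsum_mul_pow_two_mul_add_one_mul_exp_neg_sq_div_two {A : ℕ → ℝ} (n : ℕ → ℕ)
    (hA : Summable fun k => |A k| * (2 ^ n k * (n k)!)) (c : ℝ) :
    ∫ x in Ioi c, ∑' k, A k * (x ^ (2 * n k + 1) * exp (-x ^ 2 / 2))
      = ∑' k, A k * (2 ^ n k * (n k)!) *
          (exp (-c ^ 2 / 2) * ∑ i ∈ Finset.range (n k + 1), (c ^ 2 / 2) ^ i / i !) := by
  have hint (k : ℕ) := (integrable_pow_mul_exp_neg_sq_div_two (2 * n k + 1)).const_mul (A k)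
  have hnorm (k : ℕ) : ∫ x in Ioi c, ‖A k * (x ^ (2 * n k + 1) * exp (-x ^ 2 / 2))‖
      ≤ 2 * (|A k| * (2 ^ n k * (n k)!)) := by
    calc ∫ x in Ioi c, ‖A k * (x ^ (2 * n k + 1) * exp (-x ^ 2 / 2))‖
        ≤ ∫ x, ‖A k * (x ^ (2 * n k + 1) * exp (-x ^ 2 / 2))‖ :=
          setIntegral_le_integral (hint k).norm (Eventually.of_forall fun _ => norm_nonneg _)
      _ = |A k| * ∫ x, |x| ^ (2 * n k + 1) * exp (-x ^ 2 / 2) := by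
          simp only [norm_mul, norm_pow, Real.norm_eq_abs, abs_exp, integral_const_mul]
      _ = 2 * (|A k| * (2 ^ n k * (n k)!)) := by
          rw [integral_abs_pow_two_mul_add_one_mul_exp_neg_sq_div_two]
          ring
  have hsum : Summable fun k => ∫ x in Ioi c, ‖A k * (x ^ (2 * n k + 1) * exp (-x ^ 2 / 2))‖ :=
    .of_nonneg_of_le (fun _ => integral_nonneg fun _ => norm_nonneg _) hnorm (hA.mul_left 2)
  rw [← integral_tsum_of_summable_integral_norm (fun k => (hint k).integrableOn) hsum]
  refine tsum_congr fun k => ?_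
  rw [integral_const_mul, integral_Ioi_pow_two_mul_add_one_mul_exp_neg_sq_div_two]
  ring

/-- Splitting the double series of `exp X * exp Y` along the line `i = k + m`. -/
lemma exp_mul_exp_eq_tsum_add_tsum (X Y : ℝ) (m : ℕ) :
    exp X * exp Y
      = ∑' k, X ^ k / k ! * ∑ i ∈ Finset.range (k + m), Y ^ i / i !
        + ∑' j, Y ^ (j + m) / (j + m)! * ∑ k ∈ Finset.range (j + 1), X ^ k / k ! := by
  set f : ℕ × ℕ → ℝ := fun q => X ^ q.1 / q.1 ! * (Y ^ q.2 / q.2 !)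
  set s : Set (ℕ × ℕ) := {q | q.2 < q.1 + m}
  have hnorm (Z : ℝ) : Summable fun i : ℕ => ‖Z ^ i / (i !)‖ := by
    simpa only [Real.norm_eq_abs] using (Real.summable_pow_div_factorial Z).abs
  have hf : Summable f := summable_mul_of_summable_norm (hnorm X) (hnorm Y)
  have hexp (Z : ℝ) : exp Z = ∑' i : ℕ, Z ^ i / i ! := by
    rw [exp_eq_exp_ℝ, NormedSpace.exp_eq_tsum_div]
  have hbelow : ∑' q, s.indicator f q
      = ∑' k, X ^ k / k ! * ∑ i ∈ Finset.range (k + m), Y ^ i / i ! := by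
    have hrow (k : ℕ) (i : ℕ) (hi : i ∉ Finset.range (k + m)) : s.indicator f (k, i) = 0 :=
      Set.indicator_of_notMem (by simpa [s] using hi) f
    rw [(hf.indicator s).tsum_prod' fun k => summable_of_ne_finset_zero (hrow k)]
    refine tsum_congr fun k => ?_
    rw [tsum_eq_sum (hrow k), Finset.mul_sum]
    refine Finset.sum_congr rfl fun i hi => Set.indicator_of_mem (by simpa [s] using hi) f
  have hinj : Function.Injective fun q : ℕ × ℕ => (q.2, q.1 + m) := by
    intro q q' h
    simp only [Prod.ext_iff] at h ⊢
    omega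
  have hsupp : Function.support (sᶜ.indicator f) ⊆ Set.range fun q : ℕ × ℕ => (q.2, q.1 + m) := by
    rintro ⟨k, i⟩ hq
    have hki : k + m ≤ i := by simpa [s] using Set.support_indicator_subset hq
    exact ⟨(i - m, k), Prod.ext rfl (Nat.sub_add_cancel (by omega))⟩
  have habove : ∑' q, sᶜ.indicator f q
      = ∑' j, Y ^ (j + m) / (j + m)! * ∑ k ∈ Finset.range (j + 1), X ^ k / k ! := by
    have hcol (j : ℕ) (k : ℕ) (hk : k ∉ Finset.range (j + 1)) : sᶜ.indicator f (k, j + m) = 0 :=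
      Set.indicator_of_notMem (by simp [s] at hk ⊢; omega) f
    have hcomp : Summable fun q : ℕ × ℕ => sᶜ.indicator f (q.2, q.1 + m) :=
      (hf.indicator sᶜ).comp_injective hinj
    rw [← hinj.tsum_eq hsupp, hcomp.tsum_prod' fun j => summable_of_ne_finset_zero (hcol j)]
    refine tsum_congr fun j => ?_
    rw [tsum_eq_sum (hcol j), Finset.mul_sum]
    refine Finset.sum_congr rfl fun k hk => ?_
    rw [Set.indicator_of_mem (by simp [s] at hk ⊢; omega) f]
    ring
  rw [← hbelow, ← habove, ← (hf.indicator s).tsum_add (hf.indicator sᶜ)]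
  simp only [Set.indicator_self_add_compl_apply]
  rw [hexp X, hexp Y, tsum_mul_tsum_of_summable_norm (hnorm X) (hnorm Y)]

lemma marcumQ_natCast_add_one (p : ℕ) {a : ℝ} (ha : a ≠ 0) (b : ℝ) :
    marcumQ (p + 1) a b
      = exp (-a ^ 2 / 2) * exp (-b ^ 2 / 2) *
          ∑' k, (a ^ 2 / 2) ^ k / k ! * ∑ i ∈ Finset.range (k + p + 1), (b ^ 2 / 2) ^ i / i ! := by
  set A : ℕ → ℝ := fun k => exp (-a ^ 2 / 2) * ((a ^ 2 / 2) ^ k / k !) / (2 ^ (k + p) * (k + p)!)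
  have hA (k : ℕ) : A k * (2 ^ (k + p) * (k + p)!) = exp (-a ^ 2 / 2) * ((a ^ 2 / 2) ^ k / k !) :=
    div_mul_cancel₀ _ (by positivity)
  have hA_abs (k : ℕ) : |A k| = A k := abs_of_nonneg (by positivity)
  have hseries (x : ℝ) :
      x ^ ((p : ℤ) + 1) / a ^ ((p : ℤ) + 1 - 1) * exp (-(a ^ 2 + x ^ 2) / 2) *
          besselI ((p : ℤ) + 1 - 1) (a * x)
        = ∑' k, A k * (x ^ (2 * (k + p) + 1) * exp (-x ^ 2 / 2)) := by
    rw [add_sub_cancel_right, ← Nat.cast_add_one, zpow_natCast, zpow_natCast, besselI,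
      Int.natAbs_natCast, ← tsum_mul_left]
    refine tsum_congr fun k => ?_
    rw [show -(a ^ 2 + x ^ 2) / 2 = -a ^ 2 / 2 + -x ^ 2 / 2 by ring, exp_add]
    simp only [A, div_pow, mul_pow, ← pow_mul]
    field_simp
    ring
  rw [marcumQ, setIntegral_congr_fun measurableSet_Ioi fun x _ => hseries x,
    integral_Ioi_tsum_mul_pow_two_mul_add_one_mul_exp_neg_sq_div_two (fun k => k + p)
      (by simpa only [hA_abs, hA] using (Real.summable_pow_div_factorial _).mul_left _),
    ← tsum_mul_left]
  refine tsum_congr fun k => ?_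
  rw [hA]
  ring

lemma marcumQ_neg_natCast (p : ℕ) (a b : ℝ) :
    marcumQ (-p) b a
      = exp (-b ^ 2 / 2) * exp (-a ^ 2 / 2) *
          ∑' j, (b ^ 2 / 2) ^ (j + p + 1) / (j + p + 1)! *
            ∑ k ∈ Finset.range (j + 1), (a ^ 2 / 2) ^ k / k ! := by
  set D : ℕ → ℝ := fun j =>
    exp (-b ^ 2 / 2) * ((b ^ 2 / 2) ^ (j + p + 1) / (j + p + 1)!) / (2 ^ j * j !)
  have hD (j : ℕ) :
      D j * (2 ^ j * j !) = exp (-b ^ 2 / 2) * ((b ^ 2 / 2) ^ (j + p + 1) / (j + p + 1)!) :=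
    div_mul_cancel₀ _ (by positivity)
  have hD_abs (j : ℕ) : |D j| = D j := abs_of_nonneg (by positivity)
  have hseries (x : ℝ) :
      x ^ (-(p : ℤ)) / b ^ (-(p : ℤ) - 1) * exp (-(b ^ 2 + x ^ 2) / 2) *
          besselI (-(p : ℤ) - 1) (b * x)
        = ∑' j, D j * (x ^ (2 * j + 1) * exp (-x ^ 2 / 2)) := by
    rw [← neg_add', ← Nat.cast_add_one, zpow_neg, zpow_neg, zpow_natCast, zpow_natCast,
      div_inv_eq_mul, besselI, Int.natAbs_neg, Int.natAbs_natCast, ← tsum_mul_left]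
    refine tsum_congr fun j => ?_
    rw [show -(b ^ 2 + x ^ 2) / 2 = -b ^ 2 / 2 + -x ^ 2 / 2 by ring, exp_add]
    rcases eq_or_ne x 0 with rfl | hx
    · simp -- both sides vanish, the left one because `(0 ^ p)⁻¹ * 0 = 0`
    simp only [D, div_pow, mul_pow, ← pow_mul, ← add_assoc]
    field_simp
    ring
  rw [marcumQ, setIntegral_congr_fun measurableSet_Ioi fun x _ => hseries x,
    integral_Ioi_tsum_mul_pow_two_mul_add_one_mul_exp_neg_sq_div_two (fun j => j)
      (by simpa only [hD_abs, hD, Function.comp_def, add_assoc] using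
        ((summable_pow_div_factorial _).comp_injective (add_left_injective (p + 1))).mul_left _),
    ← tsum_mul_left]
  refine tsum_congr fun j => ?_
  rw [hD]
  ring

theorem marcumQ_neg_order_general (m : ℕ) (hm : 0 < m) (a b : ℝ) (ha : 0 < a) :
    marcumQ (m : ℤ) a b = 1 - marcumQ (1 - (m : ℤ)) b a := by
  obtain ⟨p, rfl⟩ : ∃ p, m = p + 1 := ⟨m - 1, by omega⟩
  have hsplit := exp_mul_exp_eq_tsum_add_tsum (a ^ 2 / 2) (b ^ 2 / 2) (p + 1)
  simp only [← add_assoc] at hsplit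
  rw [Nat.cast_add_one, sub_add_eq_sub_sub, sub_sub_cancel_left, marcumQ_natCast_add_one p ha.ne',
    marcumQ_neg_natCast, eq_sub_iff_add_eq]
  calc _ = exp (-a ^ 2 / 2) * exp (-b ^ 2 / 2) * (exp (a ^ 2 / 2) * exp (b ^ 2 / 2)) := by
        rw [hsplit]
        ring
    _ = 1 := by
        rw [← exp_add, ← exp_add, ← exp_add, ← exp_zero]
        ring_nf

/-- Q_m(a,b) = 1 − Q_{1−m}(b,a) for positive integer m. -/
theorem marcumQ_neg_order (m : ℕ) (hm : 0 < m) (a b : ℝ) (ha : 0 < a) (hb : 0 ≤ b) :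
    marcumQ (m : ℤ) a b = 1 - marcumQ (1 - (m : ℤ)) b a :=
  marcumQ_neg_order_general m hm a b ha
end

section
/- For a > 0, b > 0, and any integer m, the generalized Marcum-Q function satisfies Q_m(a,b) = (a²/2)^{1−m} · exp(−(a²+b²)/2) · Φ̃₃(1, 2−m; a²/2, a²b²/4). -/
open scoped BigOperators
open MeasureTheory

/-!
Expanding `I_{m-1}` in its power series and integrating term by term reduces everything to the
incomplete Gaussian moments `∫_b^∞ x^(2p+1) e^(-x²/2) dx = 2^p p! e^(-b²/2) e_p(b²/2)`, where
`e_p` is the truncated exponential series. With `w = a²/2`, `ζ = b²/2` this gives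
`Q_m(a,b) = e^(-(a²+b²)/2) Σ_s w^(s-m+1)/(s-m+1)! e_s(ζ)`, the Bessel term of index `j`
contributing `s = j + max(m-1, 0)`. On the other side `(1)_k = k!`, and summing the double
series of `Φ̃₃(1, 2-m; w, wζ)` along the antidiagonals `k + j = s` produces `w^s/Γ(2-m+s) e_s(ζ)`;
after multiplying by `w^(1-m)` the two series agree term by term: the terms with `s < m - 1`,
which the Bessel series does not produce, vanish because `1/Γ` vanishes at the non-positive
integers.
-/

open Real Set Filter Topology Finset
open scoped Nat

noncomputable def expPartialSum (n : ℕ) (z : ℝ) : ℝ :=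
  ∑ l ∈ range (n + 1), z ^ l / l !

theorem expPartialSum_nonneg (n : ℕ) {z : ℝ} (hz : 0 ≤ z) : 0 ≤ expPartialSum n z :=
  sum_nonneg fun _ _ => by positivity

theorem expPartialSum_le_exp (n : ℕ) {z : ℝ} (hz : 0 ≤ z) : expPartialSum n z ≤ exp z :=
  sum_le_exp_of_nonneg hz _

theorem hasDerivAt_exp_neg_mul_expPartialSum (n : ℕ) (u : ℝ) :
    HasDerivAt (fun u => exp (-u) * expPartialSum n u) (-(exp (-u) * (u ^ n / n !))) u := by
  induction n with
  | zero => simpa [expPartialSum] using (hasDerivAt_neg u).exp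
  | succ n ih =>
    have hmon : HasDerivAt (fun u : ℝ => exp (-u) * (u ^ (n + 1) / (n + 1)!))
        (-(exp (-u) * (u ^ (n + 1) / (n + 1)!)) + exp (-u) * (u ^ n / n !)) u := by
      refine ((hasDerivAt_neg u).exp.mul
        ((hasDerivAt_pow (n + 1) u).div_const ((n + 1)! : ℝ))).congr_deriv ?_
      rw [Nat.factorial_succ]
      push_cast
      field_simp
    simp only [expPartialSum, sum_range_succ _ (n + 1), mul_add] at ih ⊢
    exact (ih.add hmon).congr_deriv (by ring)

theorem tendsto_exp_neg_mul_expPartialSum_atTop (n : ℕ) :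
    Tendsto (fun u => exp (-u) * expPartialSum n u) atTop (𝓝 0) := by
  simp only [expPartialSum, mul_sum]
  rw [← sum_const_zero (s := range (n + 1))]
  refine tendsto_finsetSum _ fun l _ => ?_
  simpa [div_mul_eq_mul_div, mul_comm] using
    (tendsto_pow_mul_exp_neg_atTop_nhds_zero l).div_const (l ! : ℝ)

theorem hasDerivAt_gaussian_moment_antideriv (n : ℕ) (x : ℝ) :
    HasDerivAt (fun y => -(2 ^ n * n ! * (exp (-(y ^ 2 / 2)) * expPartialSum n (y ^ 2 / 2))))
      (x ^ (2 * n + 1) * exp (-(x ^ 2 / 2))) x := by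
  have hsq : HasDerivAt (fun y : ℝ => y ^ 2 / 2) x x := by
    simpa using (hasDerivAt_pow 2 x).div_const 2
  refine (((hasDerivAt_exp_neg_mul_expPartialSum n (x ^ 2 / 2)).comp x hsq).const_mul
    (2 ^ n * n ! : ℝ)).neg.congr_deriv ?_
  rw [div_pow, ← pow_mul]
  field_simp
  ring

theorem tendsto_gaussian_moment_antideriv (n : ℕ) :
    Tendsto (fun y => -(2 ^ n * n ! * (exp (-(y ^ 2 / 2)) * expPartialSum n (y ^ 2 / 2))))
      atTop (𝓝 0) := by
  have hsq : Tendsto (fun y : ℝ => y ^ 2 / 2) atTop atTop :=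
    (tendsto_pow_atTop two_ne_zero).atTop_div_const two_pos
  simpa using (((tendsto_exp_neg_mul_expPartialSum_atTop n).comp hsq).const_mul
    (2 ^ n * n ! : ℝ)).neg

theorem integrableOn_Ioi_pow_mul_exp_neg_sq_div_two {b : ℝ} (hb : 0 ≤ b) (n : ℕ) :
    IntegrableOn (fun x => x ^ (2 * n + 1) * exp (-(x ^ 2 / 2))) (Ioi b) :=
  integrableOn_Ioi_deriv_of_nonneg' (fun x _ => hasDerivAt_gaussian_moment_antideriv n x)
    (fun x hx => by have : 0 < x := hb.trans_lt hx; positivity)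
    (tendsto_gaussian_moment_antideriv n)

theorem integral_Ioi_pow_mul_exp_neg_sq_div_two {b : ℝ} (hb : 0 ≤ b) (n : ℕ) :
    ∫ x in Ioi b, x ^ (2 * n + 1) * exp (-(x ^ 2 / 2))
      = 2 ^ n * n ! * exp (-(b ^ 2 / 2)) * expPartialSum n (b ^ 2 / 2) := by
  rw [integral_Ioi_of_hasDerivAt_of_nonneg'
    (fun x _ => hasDerivAt_gaussian_moment_antideriv n x)
    (fun x hx => by have : 0 < x := hb.trans_lt hx; positivity)
    (tendsto_gaussian_moment_antideriv n)]
  ring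

section Antidiagonal
variable {A : Type*} [AddCommMonoid A] [HasAntidiagonal A]

theorem Summable.tsum_prod_eq_tsum_sum_antidiagonal {α : Type*} [AddCommMonoid α]
    [TopologicalSpace α] [ContinuousAdd α] [T3Space α] {f : A × A → α} (hf : Summable f) :
    ∑' p, f p = ∑' n, ∑ p ∈ antidiagonal n, f p := by
  rw [← HasAntidiagonal.sigmaAntidiagonalEquivProd.tsum_eq f]
  exact ((HasAntidiagonal.sigmaAntidiagonalEquivProd.summable_iff.mpr hf).tsum_sigma'
    fun n => (hasSum_fintype _).summable).trans (tsum_congr fun n => Finset.tsum_subtype _ _)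

theorem summable_prod_iff_summable_sum_antidiagonal_of_nonneg {f : A × A → ℝ} (hf : 0 ≤ f) :
    Summable f ↔ Summable fun n => ∑ p ∈ antidiagonal n, f p := by
  rw [← HasAntidiagonal.sigmaAntidiagonalEquivProd.summable_iff,
    Function.comp_def, summable_sigma_of_nonneg fun _ => hf _]
  simp only [HasAntidiagonal.sigmaAntidiagonalEquivProd_apply, Finset.tsum_subtype]
  exact and_iff_right fun n => (hasSum_fintype _).summable

end Antidiagonal

theorem inv_Gamma_intCast_add_one (n : ℤ) :
    (Gamma (n + 1))⁻¹ = if 0 ≤ n then ((n.toNat)! : ℝ)⁻¹ else 0 := by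
  split_ifs with hn
  · rw [← Int.toNat_of_nonneg hn, Int.cast_natCast, Gamma_nat_eq_factorial, Int.toNat_natCast]
  · obtain ⟨k, hk⟩ := Int.exists_eq_neg_ofNat (show n + 1 ≤ 0 by omega)
    have : (n : ℝ) + 1 = -k := by exact_mod_cast hk
    rw [this, Gamma_neg_nat_eq_zero, inv_zero]

theorem inv_Gamma_intCast_add_one_nonneg (n : ℤ) : 0 ≤ (Gamma (n + 1))⁻¹ := by
  rw [inv_Gamma_intCast_add_one]
  split_ifs <;> positivity

theorem phi3Term_one (c w z : ℝ) (k j : ℕ) :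
    phi3Term 1 c w z k j = w ^ k * z ^ j * (Gamma (c + k + j))⁻¹ / j ! := by
  rw [phi3Term, ascPochhammer_eval_one]
  field_simp

theorem sum_antidiagonal_phi3Term_one (c w ζ : ℝ) (s : ℕ) :
    ∑ p ∈ antidiagonal s, phi3Term 1 c w (w * ζ) p.1 p.2
      = w ^ s * (Gamma (c + s))⁻¹ * expPartialSum s ζ := by
  rw [expPartialSum, mul_sum, ← Nat.sum_antidiagonal_swap,
    Nat.sum_antidiagonal_eq_sum_range_succ_mk]
  refine sum_congr rfl fun k hk => ?_
  obtain ⟨j, rfl⟩ := Nat.exists_eq_add_of_le (Nat.lt_succ_iff.mp (mem_range.mp hk))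
  rw [Prod.swap_prod_mk, Nat.add_sub_cancel_left, phi3Term_one]
  push_cast
  rw [add_assoc c, add_comm (j : ℝ)]
  ring

/-- `w ^ (s - ν) / (s - ν)! * e_s(ζ)`, where `1 / Γ(n + 1)` serves as a reciprocal factorial that
vanishes at the negative integers `n`. -/
noncomputable def marcumSeriesTerm (ν : ℤ) (w ζ : ℝ) (s : ℕ) : ℝ :=
  w ^ ((s : ℤ) - ν) * (Gamma (((s - ν : ℤ)) + 1))⁻¹ * expPartialSum s ζ

section MarcumSeriesTerm
variable (ν : ℤ) {w ζ : ℝ}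

theorem marcumSeriesTerm_eq_zero_of_lt {s : ℕ} (hs : (s : ℤ) < ν) :
    marcumSeriesTerm ν w ζ s = 0 := by
  rw [marcumSeriesTerm, inv_Gamma_intCast_add_one, if_neg (by omega), mul_zero, zero_mul]

theorem marcumSeriesTerm_add_toNat (j : ℕ) :
    marcumSeriesTerm ν w ζ (j + ν.toNat)
      = w ^ (j + (-ν).toNat) / (j + (-ν).toNat)! * expPartialSum (j + ν.toNat) ζ := by
  have h : ((j + ν.toNat : ℕ) : ℤ) - ν = ((j + (-ν).toNat : ℕ) : ℤ) := by omega
  rw [marcumSeriesTerm, h, zpow_natCast, Int.cast_natCast, Gamma_nat_eq_factorial, div_eq_mul_inv]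

theorem summable_marcumSeriesTerm (hw : 0 ≤ w) (hζ : 0 ≤ ζ) :
    Summable (marcumSeriesTerm ν w ζ) := by
  rw [← summable_nat_add_iff ν.toNat]
  simp only [marcumSeriesTerm_add_toNat]
  refine Summable.of_nonneg_of_le (fun j => ?_) (fun j => ?_)
    (((summable_nat_add_iff (-ν).toNat).mpr (Real.summable_pow_div_factorial w)).mul_right (exp ζ))
  · exact mul_nonneg (by positivity) (expPartialSum_nonneg _ hζ)
  · exact mul_le_mul_of_nonneg_left (expPartialSum_le_exp _ hζ) (by positivity)

end MarcumSeriesTerm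

theorem zpow_mul_sum_antidiagonal_phi3Term_one (m : ℤ) {w ζ : ℝ} (hw : w ≠ 0) (s : ℕ) :
    w ^ (1 - m) * ∑ p ∈ antidiagonal s, phi3Term 1 (2 - (m : ℝ)) w (w * ζ) p.1 p.2
      = marcumSeriesTerm (m - 1) w ζ s := by
  rw [sum_antidiagonal_phi3Term_one, marcumSeriesTerm, ← mul_assoc, ← mul_assoc, ← zpow_natCast,
    ← zpow_add₀ hw]
  congr 3
  · ring
  · push_cast
    ring_nf

theorem zpow_mul_Phi3_one_eq_tsum_marcumSeriesTerm (m : ℤ) {w ζ : ℝ} (hw : 0 < w) (hζ : 0 ≤ ζ) :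
    w ^ (1 - m) * Phi3 1 (2 - (m : ℝ)) w (w * ζ) = ∑' s, marcumSeriesTerm (m - 1) w ζ s := by
  set f : ℕ × ℕ → ℝ := fun p => phi3Term 1 (2 - (m : ℝ)) w (w * ζ) p.1 p.2
  have hf_nonneg : 0 ≤ f := fun p => by
    have hc : 2 - (m : ℝ) + p.1 + p.2 = ((1 - m + p.1 + p.2 : ℤ) : ℝ) + 1 := by
      push_cast
      ring
    have hΓ := inv_Gamma_intCast_add_one_nonneg (1 - m + p.1 + p.2)
    simp only [f, phi3Term_one, hc]
    positivity
  have hf : Summable f := by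
    rw [summable_prod_iff_summable_sum_antidiagonal_of_nonneg hf_nonneg]
    refine ((summable_marcumSeriesTerm (m - 1) hw.le hζ).mul_left (w ^ (m - 1))).congr fun s => ?_
    rw [← zpow_mul_sum_antidiagonal_phi3Term_one m hw.ne', ← mul_assoc, ← zpow_add₀ hw.ne']
    simp [f]
  rw [Phi3, ← hf.tsum_prod' hf.prod_factor, hf.tsum_prod_eq_tsum_sum_antidiagonal, ← tsum_mul_left]
  exact tsum_congr (zpow_mul_sum_antidiagonal_phi3Term_one m hw.ne')

theorem besselI_eq_tsum (ν : ℤ) (y : ℝ) :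
    besselI ν y = ∑' j : ℕ, (y / 2) ^ ((j + ν.toNat) + (j + (-ν).toNat)) /
      ((j + ν.toNat)! * (j + (-ν).toNat)!) := by
  refine tsum_congr fun j => ?_
  have hexp : 2 * j + ν.natAbs = (j + ν.toNat) + (j + (-ν).toNat) := by omega
  rcases le_total 0 ν with hν | hν
  · obtain ⟨h₁, h₂⟩ : ν.toNat = ν.natAbs ∧ (-ν).toNat = 0 := by omega
    rw [hexp, h₁, h₂, add_zero, mul_comm]
  · obtain ⟨h₁, h₂⟩ : ν.toNat = 0 ∧ (-ν).toNat = ν.natAbs := by omega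
    rw [hexp, h₁, h₂, add_zero]

theorem marcumQ_integrand_term {m : ℤ} {p q : ℕ} (hpq : (p : ℤ) - q = m - 1) {a x : ℝ}
    (ha : a ≠ 0) (hx : x ≠ 0) :
    x ^ m / a ^ (m - 1) * exp (-(a ^ 2 + x ^ 2) / 2) * ((a * x / 2) ^ (p + q) / (p ! * q !))
      = exp (-(a ^ 2 / 2)) * (a ^ 2 / 2) ^ q / (2 ^ p * p ! * q !) *
          (x ^ (2 * p + 1) * exp (-(x ^ 2 / 2))) := by
  have hx_pow : x ^ m * x ^ (p + q) = x ^ (2 * p + 1) := by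
    rw [← zpow_natCast, ← zpow_natCast, ← zpow_add₀ hx]
    congr 1
    omega
  have ha_pow : a ^ (p + q) / a ^ (m - 1) = a ^ (2 * q) := by
    rw [← zpow_natCast, ← zpow_natCast, ← zpow_sub₀ ha]
    congr 1
    omega
  have hexp : exp (-(a ^ 2 + x ^ 2) / 2) = exp (-(a ^ 2 / 2)) * exp (-(x ^ 2 / 2)) := by
    rw [← exp_add]
    ring_nf
  calc x ^ m / a ^ (m - 1) * exp (-(a ^ 2 + x ^ 2) / 2) * ((a * x / 2) ^ (p + q) / (p ! * q !))
      = (x ^ m * x ^ (p + q)) * (a ^ (p + q) / a ^ (m - 1)) * exp (-(a ^ 2 + x ^ 2) / 2) /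
          (2 ^ p * 2 ^ q * p ! * q !) := by
        rw [div_pow, mul_pow, pow_add]
        ring
    _ = _ := by
        rw [hx_pow, ha_pow, hexp, pow_mul, div_pow]
        ring

theorem integral_Ioi_marcumQ_term {b : ℝ} (hb : 0 ≤ b) (a : ℝ) (p q : ℕ) :
    ∫ x in Ioi b, exp (-(a ^ 2 / 2)) * (a ^ 2 / 2) ^ q / (2 ^ p * p ! * q !) *
        (x ^ (2 * p + 1) * exp (-(x ^ 2 / 2)))
      = exp (-(a ^ 2 + b ^ 2) / 2) * ((a ^ 2 / 2) ^ q / q ! * expPartialSum p (b ^ 2 / 2)) := by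
  rw [integral_const_mul, integral_Ioi_pow_mul_exp_neg_sq_div_two hb,
    show -(a ^ 2 + b ^ 2) / 2 = -(a ^ 2 / 2) + -(b ^ 2 / 2) by ring, exp_add]
  field_simp

theorem marcumQ_eq_tsum_marcumSeriesTerm (m : ℤ) {a b : ℝ} (ha : a ≠ 0) (hb : 0 ≤ b) :
    marcumQ m a b
      = exp (-(a ^ 2 + b ^ 2) / 2) * ∑' s, marcumSeriesTerm (m - 1) (a ^ 2 / 2) (b ^ 2 / 2) s := by
  set ν := m - 1
  set g : ℕ → ℝ → ℝ := fun j x =>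
    exp (-(a ^ 2 / 2)) * (a ^ 2 / 2) ^ (j + (-ν).toNat) /
      (2 ^ (j + ν.toNat) * (j + ν.toNat)! * (j + (-ν).toNat)!) *
      (x ^ (2 * (j + ν.toNat) + 1) * exp (-(x ^ 2 / 2)))
  have hg_nonneg : ∀ j, ∀ x ∈ Ioi b, 0 ≤ g j x := fun j x hx => by
    have : 0 < x := hb.trans_lt hx
    positivity
  have hg_integral : ∀ j, ∫ x in Ioi b, g j x
      = exp (-(a ^ 2 + b ^ 2) / 2) * marcumSeriesTerm ν (a ^ 2 / 2) (b ^ 2 / 2) (j + ν.toNat) :=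
    fun j => by rw [integral_Ioi_marcumQ_term hb, marcumSeriesTerm_add_toNat]
  have hg_norm : ∀ j, ∫ x in Ioi b, ‖g j x‖ = ∫ x in Ioi b, g j x := fun j =>
    setIntegral_congr_fun measurableSet_Ioi fun x hx => norm_of_nonneg (hg_nonneg j x hx)
  have hsupp : Function.support (marcumSeriesTerm ν (a ^ 2 / 2) (b ^ 2 / 2))
      ⊆ Set.range (· + ν.toNat) := fun s hs => by
    have : ν.toNat ≤ s := by
      by_contra! h
      exact hs (marcumSeriesTerm_eq_zero_of_lt ν (by omega))
    exact ⟨s - ν.toNat, Nat.sub_add_cancel this⟩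
  calc marcumQ m a b = ∫ x in Ioi b, ∑' j, g j x :=
        setIntegral_congr_fun measurableSet_Ioi fun x hx => by
          rw [besselI_eq_tsum, ← tsum_mul_left]
          exact tsum_congr fun j => marcumQ_integrand_term (by omega) ha (hb.trans_lt hx).ne'
    _ = ∑' j, ∫ x in Ioi b, g j x := by
        refine (integral_tsum_of_summable_integral_norm
          (fun j => (integrableOn_Ioi_pow_mul_exp_neg_sq_div_two hb _).const_mul _) ?_).symm
        refine Summable.congr ?_ fun j => ((hg_norm j).trans (hg_integral j)).symm
        exact ((summable_nat_add_iff _).mpr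
          (summable_marcumSeriesTerm ν (by positivity) (by positivity))).mul_left _
    _ = _ := by
        rw [tsum_congr hg_integral, tsum_mul_left, (add_left_injective ν.toNat).tsum_eq hsupp]

/-- Q_m(a,b) = (a²/2)^{1−m} e^{−(a²+b²)/2} Φ̃₃(1,2−m;a²/2,a²b²/4), integer m. -/
theorem marcumQ_phi3 (m : ℤ) (a b : ℝ) (ha : 0 < a) (hb : 0 < b) :
    marcumQ m a b =
      (a ^ 2 / 2) ^ (1 - m) * Real.exp (-(a ^ 2 + b ^ 2) / 2) *
        Phi3 1 (2 - (m : ℝ)) (a ^ 2 / 2) (a ^ 2 * b ^ 2 / 4) := by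
  rw [marcumQ_eq_tsum_marcumSeriesTerm m ha.ne' hb.le,
    show a ^ 2 * b ^ 2 / 4 = a ^ 2 / 2 * (b ^ 2 / 2) by ring,
    ← zpow_mul_Phi3_one_eq_tsum_marcumSeriesTerm m (by positivity) (by positivity)]
  ring
end

section
/- For a > 0, b > 0, and positive integer m, the integrand of the generalized Marcum-Q function is integrable on (b,∞): the function x ↦ (x^m / a^{m−1}) e^{−(a²+x²)/2} I_{m−1}(ax) is Lebesgue integrable on (b,∞), and moreover 0 ≤ Q_m(a,b) ≤ 1. -/
/-!
Expanding `I_{m-1}` in its power series shows that the Marcum integrand of order `m = n + 1`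
is the Poisson mixture `∑ⱼ e^{-a²/2} (a²/2)ʲ / j! · χ_{2(j+m)}(x)` of chi densities.
Integrating termwise over `(0, ∞)` gives `Q_m(a, 0) = ∑ⱼ e^{-a²/2} (a²/2)ʲ / j! = 1`; as the
integrand is nonnegative on `(0, ∞)`, the tail `Q_m(a, b)` lies in `[0, 1]`.
-/

open scoped BigOperators
open MeasureTheory

open Real Set MeasureTheory
open scoped Nat

namespace MeasureTheory

variable {α ι : Type*} [MeasurableSpace α] {μ : Measure α} [Countable ι]

theorem integrable_tsum_of_summable_integral_norm {E : Type*} [NormedAddCommGroup E]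
    [CompleteSpace E] {F : ι → α → E} (hF_int : ∀ i, Integrable (F i) μ)
    (hF_sum : Summable fun i ↦ ∫ a, ‖F i a‖ ∂μ) :
    Integrable (fun a ↦ ∑' i, F i a) μ := by
  refine ⟨.tsum fun i ↦ (hF_int i).1, ?_⟩
  calc ∫⁻ a, ‖∑' i, F i a‖ₑ ∂μ ≤ ∫⁻ a, ∑' i, ‖F i a‖ₑ ∂μ :=
        lintegral_mono fun _ ↦ enorm_tsum_le_tsum_enorm
    _ = ∑' i, ∫⁻ a, ‖F i a‖ₑ ∂μ := lintegral_tsum fun i ↦ (hF_int i).1.enorm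
    _ = ∑' i, ENNReal.ofReal (∫ a, ‖F i a‖ ∂μ) := by
        simp only [ofReal_integral_norm_eq_lintegral_enorm (hF_int _)]
    _ < ⊤ := hF_sum.tsum_ofReal_lt_top

theorem integrable_tsum_mul_and_hasSum_integral {w : ι → ℝ} {f : ι → α → ℝ} (hw : Summable w)
    (hw_nonneg : ∀ i, 0 ≤ w i) (hf_nonneg : ∀ i, 0 ≤ᵐ[μ] f i)
    (hf_int : ∀ i, Integrable (f i) μ) (hf_one : ∀ i, ∫ a, f i a ∂μ = 1) :
    Integrable (fun a ↦ ∑' i, w i * f i a) μ ∧ HasSum w (∫ a, ∑' i, w i * f i a ∂μ) := by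
  have hint i : Integrable (fun a ↦ w i * f i a) μ := (hf_int i).const_mul _
  have hnorm i : ∫ a, ‖w i * f i a‖ ∂μ = w i :=
    calc ∫ a, ‖w i * f i a‖ ∂μ = ∫ a, w i * f i a ∂μ :=
          integral_congr_ae <| (hf_nonneg i).mono fun a ha ↦
            Real.norm_of_nonneg (mul_nonneg (hw_nonneg i) ha)
      _ = w i := by rw [integral_const_mul, hf_one, mul_one]
  have hsum : Summable fun i ↦ ∫ a, ‖w i * f i a‖ ∂μ := by simpa only [hnorm] using hw
  refine ⟨integrable_tsum_of_summable_integral_norm hint hsum, ?_⟩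
  simpa only [integral_const_mul, hf_one, mul_one] using
    hasSum_integral_of_summable_integral_norm hint hsum

end MeasureTheory

theorem integrableOn_pow_mul_exp_neg_sq_div_two (k : ℕ) :
    IntegrableOn (fun x : ℝ ↦ x ^ k * exp (-x ^ 2 / 2)) (Ioi 0) := by
  refine (integrableOn_rpow_mul_exp_neg_mul_sq one_half_pos
    (neg_one_lt_zero.trans_le (Nat.cast_nonneg k))).congr_fun (fun x _ ↦ ?_) measurableSet_Ioi
  simp only [rpow_natCast]
  ring_nf

theorem integral_pow_mul_exp_neg_sq_div_two (k : ℕ) :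
    ∫ x in Ioi (0 : ℝ), x ^ (2 * k + 1) * exp (-x ^ 2 / 2) = 2 ^ k * k ! := by
  have h := integral_rpow_mul_exp_neg_mul_rpow (q := ((2 * k + 1 : ℕ) : ℝ)) two_pos
    (neg_one_lt_zero.trans_le (Nat.cast_nonneg _)) (one_half_pos (α := ℝ))
  have hpow : -(((2 * k + 1 : ℕ) : ℝ) + 1) / 2 = -((k + 1 : ℕ) : ℝ) := by push_cast; ring
  have hΓ : (((2 * k + 1 : ℕ) : ℝ) + 1) / 2 = (k : ℝ) + 1 := by push_cast; ring
  rw [hpow, hΓ, Gamma_nat_eq_factorial, one_div, inv_rpow zero_le_two, rpow_neg zero_le_two,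
    inv_inv, rpow_natCast] at h
  rw [show (2 : ℝ) ^ k * (k)! = 2 ^ (k + 1) * 2⁻¹ * (k)! by ring, ← h]
  refine setIntegral_congr_fun measurableSet_Ioi fun x _ ↦ ?_
  simp only [rpow_natCast, rpow_two]
  ring_nf

/-- The density of the chi distribution with `2 * k + 2` degrees of freedom. -/
noncomputable def chiDensity (k : ℕ) (x : ℝ) : ℝ :=
  x ^ (2 * k + 1) * exp (-x ^ 2 / 2) / (2 ^ k * k !)

theorem chiDensity_nonneg (k : ℕ) {x : ℝ} (hx : 0 ≤ x) : 0 ≤ chiDensity k x := by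
  unfold chiDensity
  positivity

theorem integrableOn_chiDensity (k : ℕ) : IntegrableOn (chiDensity k) (Ioi 0) :=
  (integrableOn_pow_mul_exp_neg_sq_div_two _).div_const _

theorem integral_chiDensity (k : ℕ) : ∫ x in Ioi (0 : ℝ), chiDensity k x = 1 := by
  simp only [chiDensity, integral_div, integral_pow_mul_exp_neg_sq_div_two]
  exact div_self (by positivity)

theorem besselI_nonneg (n : ℤ) {x : ℝ} (hx : 0 ≤ x) : 0 ≤ besselI n x :=
  tsum_nonneg fun _ ↦ by positivity

noncomputable def marcumIntegrand (m : ℤ) (a x : ℝ) : ℝ :=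
  x ^ m / a ^ (m - 1) * exp (-(a ^ 2 + x ^ 2) / 2) * besselI (m - 1) (a * x)

theorem marcumQ_eq_integral (m : ℤ) (a b : ℝ) :
    marcumQ m a b = ∫ x in Ioi b, marcumIntegrand m a x := rfl

theorem marcumIntegrand_nonneg (m : ℤ) {a x : ℝ} (ha : 0 ≤ a) (hx : 0 ≤ x) :
    0 ≤ marcumIntegrand m a x := by
  unfold marcumIntegrand
  have := besselI_nonneg (m - 1) (mul_nonneg ha hx)
  positivity

theorem marcumIntegrand_eq_tsum (n : ℕ) {a : ℝ} (ha : a ≠ 0) (x : ℝ) :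
    marcumIntegrand (n + 1) a x =
      ∑' j : ℕ, exp (-(a ^ 2 / 2)) * (a ^ 2 / 2) ^ j / j ! * chiDensity (j + n) x := by
  have hnatAbs : ((n : ℤ) + 1 - 1).natAbs = n := by simp
  rw [marcumIntegrand, besselI, hnatAbs, add_sub_cancel_right, zpow_natCast,
    show (n : ℤ) + 1 = ((n + 1 : ℕ) : ℤ) by push_cast; rfl, zpow_natCast, ← tsum_mul_left]
  refine tsum_congr fun j ↦ ?_
  have hexp : exp (-(a ^ 2 + x ^ 2) / 2) = exp (-(a ^ 2 / 2)) * exp (-x ^ 2 / 2) := by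
    rw [← exp_add]
    ring_nf
  rw [chiDensity, hexp]
  simp only [div_pow]
  rw [show (2 : ℝ) ^ (2 * j + n) = 2 ^ j * 2 ^ (j + n) by ring]
  field_simp
  ring

theorem integrableOn_marcumIntegrand_and_marcumQ_zero (n : ℕ) {a : ℝ} (ha : a ≠ 0) :
    IntegrableOn (marcumIntegrand (n + 1) a) (Ioi 0) ∧ marcumQ (n + 1) a 0 = 1 := by
  have hpoisson : HasSum (fun j : ℕ ↦ exp (-(a ^ 2 / 2)) * (a ^ 2 / 2) ^ j / j !) 1 :=
    ProbabilityTheory.hasSum_one_poissonMeasure ⟨a ^ 2 / 2, by positivity⟩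
  obtain ⟨hint, hsum⟩ := integrable_tsum_mul_and_hasSum_integral (μ := volume.restrict (Ioi 0))
    (f := fun j ↦ chiDensity (j + n)) hpoisson.summable (fun _ ↦ by positivity)
    (fun _ ↦ (ae_restrict_mem measurableSet_Ioi).mono fun _ hx ↦ chiDensity_nonneg _ hx.le)
    (fun _ ↦ integrableOn_chiDensity _) (fun _ ↦ integral_chiDensity _)
  rw [marcumQ_eq_integral, funext (marcumIntegrand_eq_tsum n ha)]
  exact ⟨hint, hsum.unique hpoisson⟩

theorem marcumQ_nonneg (m : ℤ) {a b : ℝ} (ha : 0 ≤ a) (hb : 0 ≤ b) : 0 ≤ marcumQ m a b :=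
  setIntegral_nonneg measurableSet_Ioi fun _ hx ↦ marcumIntegrand_nonneg m ha (hb.trans hx.le)

theorem marcumQ_le_marcumQ_of_le (m : ℤ) {a b b' : ℝ} (ha : 0 ≤ a) (hb : 0 ≤ b) (hbb' : b ≤ b')
    (hint : IntegrableOn (marcumIntegrand m a) (Ioi b)) : marcumQ m a b' ≤ marcumQ m a b :=
  setIntegral_mono_set hint
    (ae_restrict_of_forall_mem measurableSet_Ioi fun _ hx ↦
      marcumIntegrand_nonneg m ha (hb.trans hx.le))
    (Ioi_subset_Ioi hbb').eventuallyLE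

/-- integrability of the Marcum-Q integrand and 0 ≤ Q_m(a,b) ≤ 1. -/
theorem marcumQ_integrable_and_bounds (m : ℕ) (hm : 0 < m) (a b : ℝ)
    (ha : 0 < a) (hb : 0 < b) :
    IntegrableOn
        (fun x : ℝ => x ^ (m : ℤ) / a ^ ((m : ℤ) - 1) *
          Real.exp (-(a ^ 2 + x ^ 2) / 2) * besselI ((m : ℤ) - 1) (a * x))
        (Set.Ioi b) ∧
      0 ≤ marcumQ (m : ℤ) a b ∧ marcumQ (m : ℤ) a b ≤ 1 := by
  obtain ⟨n, rfl⟩ := Nat.exists_eq_add_one.mpr hm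
  obtain ⟨hint, hQ⟩ := integrableOn_marcumIntegrand_and_marcumQ_zero n ha.ne'
  push_cast
  refine ⟨hint.mono_set (Ioi_subset_Ioi hb.le), marcumQ_nonneg _ ha.le hb.le, ?_⟩
  exact hQ ▸ marcumQ_le_marcumQ_of_le _ ha.le le_rfl hb.le hint
end
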